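/- Let Θ be the solenoid of type (w₁, w₂, …) and n ≥ 0. Then Θ is homeomorphic to the mapping torus of the translation ψₙ : Γₙ → Γₙ, ψₙ(x) = γ(w₁⋯wₙ)·x. -/

import Mathlib

open Topology

/-- The solenoid of type `(w 0, w 1, …)` (denoted `(w₁, w₂, …)` in the paper),
as a subgroup of the product of countably many circles:
`{(x₀, x₁, …) : xₙ₋₁ = xₙ ^ wₙ for all n ≥ 1}`. -/
noncomputable def solenoidSubgroup (w : ℕ → ℕ) : Subgroup (ℕ → Circle) where
  carrier := {x | ∀ n, x n = x (n + 1) ^ w n}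
  one_mem' := by intro n; simp
  mul_mem' := by intro a b ha hb n; simp only [Pi.mul_apply, ha n, hb n, mul_pow]
  inv_mem' := by intro a ha n; simp only [Pi.inv_apply, ha n, inv_pow]

/-- The solenoid as a topological space, with the subspace topology from the
product topology. -/
noncomputable abbrev Solenoid (w : ℕ → ℕ) : Type :=
  ↥(solenoidSubgroup w)

/-- `Γₙ`, the kernel of the projection of the solenoid onto its `n`-th
coordinate: `{x ∈ Θ | x₀ = x₁ = ⋯ = xₙ = 1}`, as a subgroup of the solenoid. -/
noncomputable def gammaSubgroup (w : ℕ → ℕ) (n : ℕ) : Subgroup (Solenoid w) where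
  carrier := {x | ∀ k ≤ n, (x : ℕ → Circle) k = 1}
  one_mem' := by intro k _; simp
  mul_mem' := by
    intro a b ha hb k hk
    simp only [Subgroup.coe_mul, Pi.mul_apply, ha k hk, hb k hk, one_mul]
  inv_mem' := by
    intro a ha k hk
    simp only [Subgroup.coe_inv, Pi.inv_apply, ha k hk, inv_one]

private lemma circle_exp_pow (b : ℝ) (m : ℕ) :
    Circle.exp b ^ m = Circle.exp (m * b) := by
  induction m with
  | zero => simp
  | succ k ih =>
    rw [pow_succ, ih, ← Circle.exp_add, Nat.cast_succ]
    ring_nf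

private lemma w_cast_ne_zero {w : ℕ → ℕ} (hw : ∀ n, 1 < w n) (j : ℕ) :
    (w j : ℝ) ≠ 0 := by
  exact_mod_cast (Nat.zero_lt_of_lt (hw j)).ne'

private lemma prod_w_ne_zero {w : ℕ → ℕ} (hw : ∀ n, 1 < w n) (k : ℕ) :
    (∏ j ∈ Finset.range k, (w j : ℝ)) ≠ 0 :=
  Finset.prod_ne_zero_iff.mpr fun j _ => w_cast_ne_zero hw j

private lemma solenoidGamma_mem (w : ℕ → ℕ) (hw : ∀ n, 1 < w n) (t : ℝ) :
    (fun k => Circle.exp (2 * Real.pi * t / ∏ j ∈ Finset.range k, (w j : ℝ)))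
      ∈ solenoidSubgroup w := by
  intro k
  show Circle.exp _ = Circle.exp _ ^ w k
  rw [circle_exp_pow]
  congr 1
  rw [Finset.prod_range_succ]
  have h1 := prod_w_ne_zero hw k
  have h2 := w_cast_ne_zero hw k
  field_simp

/-- The one-parameter subgroup `γ : ℝ → Θ`,
`γ(t) = (e^{2πit}, e^{2πit/w₁}, e^{2πit/(w₁w₂)}, …)`. -/
noncomputable def solenoidGamma (w : ℕ → ℕ) (hw : ∀ n, 1 < w n) (t : ℝ) :
    Solenoid w :=
  ⟨fun k => Circle.exp (2 * Real.pi * t / ∏ j ∈ Finset.range k, (w j : ℝ)),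
    solenoidGamma_mem w hw t⟩

private lemma solenoidGamma_mem_gamma (w : ℕ → ℕ) (hw : ∀ n, 1 < w n) (n : ℕ) :
    solenoidGamma w hw (∏ j ∈ Finset.range n, (w j : ℝ)) ∈ gammaSubgroup w n := by
  intro k hk
  show Circle.exp _ = 1
  have h1 := prod_w_ne_zero hw k
  have key : 2 * Real.pi * (∏ j ∈ Finset.range n, (w j : ℝ)) /
      (∏ j ∈ Finset.range k, (w j : ℝ)) =
      ((∏ j ∈ Finset.Ico k n, w j : ℕ) : ℤ) * (2 * Real.pi) := by
    rw [← Finset.prod_range_mul_prod_Ico (fun j => ((w j : ℝ))) hk]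
    push_cast
    field_simp
  rw [key]
  exact Circle.exp_int_mul_two_pi _

/-- The translation `ψₙ : Γₙ → Γₙ`, `ψₙ(x) = γ(w₁⋯wₙ) · x`. -/
noncomputable def solenoidPsi (w : ℕ → ℕ) (hw : ∀ n, 1 < w n) (n : ℕ) :
    ↥(gammaSubgroup w n) → ↥(gammaSubgroup w n) :=
  fun x =>
    (⟨solenoidGamma w hw (∏ j ∈ Finset.range n, (w j : ℝ)),
      solenoidGamma_mem_gamma w hw n⟩ : ↥(gammaSubgroup w n)) * x

/-- The defining identification of the mapping torus of `f : Y → Y`: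
`(y, 1)` is glued to `(f y, 0)` in `Y × [0,1]`. -/
def MappingTorusRel {Y : Type*} (f : Y → Y) (a b : Y × ↥unitInterval) : Prop :=
  a.2 = 1 ∧ b.2 = 0 ∧ b.1 = f a.1

/-- The mapping torus of `f : Y → Y`: the quotient of `Y × [0,1]` obtained by
identifying `(y, 1)` with `(f y, 0)`, with the quotient topology. -/
def MappingTorus {Y : Type*} [TopologicalSpace Y] (f : Y → Y) : Type _ :=
  Quot (MappingTorusRel f)

noncomputable instance {Y : Type*} [TopologicalSpace Y] (f : Y → Y) :
    TopologicalSpace (MappingTorus f) :=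
  inferInstanceAs (TopologicalSpace (Quot (MappingTorusRel f)))

/-! The projection `pₙ : Θ → S¹` is a continuous homomorphism with kernel `Γₙ`, and
`t ↦ γ(t · w₁⋯wₙ)` is a path starting at `1` which `pₙ` sends to the loop `t ↦ e^{2πit}`.
Hence `(x, t) ↦ γ(t · w₁⋯wₙ) · x` maps `Γₙ × [0,1]` onto `Θ` and identifies exactly the pairs
`(x, 1) ~ (ψₙ x, 0)`. It therefore induces a continuous bijection from the compact mapping torus
onto the Hausdorff space `Θ`, i.e. a homeomorphism. -/

open Set

namespace Circle

lemma eq_or_of_exp_two_pi_mul_eq {t s : ℝ} (ht : t ∈ Icc (0 : ℝ) 1) (hs : s ∈ Icc (0 : ℝ) 1)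
    (h : exp (2 * Real.pi * t) = exp (2 * Real.pi * s)) :
    t = s ∨ t = 1 ∧ s = 0 ∨ t = 0 ∧ s = 1 := by
  obtain ⟨m, hm⟩ := exp_eq_exp.mp h
  have hts : t - s = m := by
    have := Real.pi_pos
    nlinarith
  have hm1 : -1 ≤ m := by
    have : (-1 : ℝ) ≤ m := by linarith [ht.1, hs.2]
    exact_mod_cast this
  have hm2 : m ≤ 1 := by
    have : (m : ℝ) ≤ 1 := by linarith [ht.2, hs.1]
    exact_mod_cast this
  interval_cases m <;> push_cast at hts
  · right; right; constructor <;> linarith [ht.1, hs.2]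
  · left; linarith
  · right; left; constructor <;> linarith [ht.2, hs.1]

lemma exists_mem_Ico_exp_two_pi_mul_eq (z : Circle) :
    ∃ t ∈ Ico (0 : ℝ) 1, exp (2 * Real.pi * t) = z := by
  obtain ⟨r, rfl⟩ := exp_surjective z
  refine ⟨Int.fract (r / (2 * Real.pi)), ⟨Int.fract_nonneg _, Int.fract_lt_one _⟩, ?_⟩
  refine exp_eq_exp.mpr ⟨-⌊r / (2 * Real.pi)⌋, ?_⟩
  rw [Int.fract]
  field_simp
  push_cast
  ring

end Circle

namespace MappingTorus

variable {Y X : Type*} [TopologicalSpace Y] {f : Y → Y}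

def lift (F : Y × unitInterval → X) (hF : ∀ y, F (y, 1) = F (f y, 0)) : MappingTorus f → X :=
  Quot.lift F <| by
    rintro ⟨y, t⟩ ⟨z, s⟩ ⟨rfl, rfl, rfl⟩
    exact hF y

lemma continuous_lift [TopologicalSpace X] {F : Y × unitInterval → X}
    {hF : ∀ y, F (y, 1) = F (f y, 0)} (hc : Continuous F) : Continuous (lift F hF) :=
  continuous_quot_lift _ hc

lemma lift_injective {F : Y × unitInterval → X} {hF : ∀ y, F (y, 1) = F (f y, 0)}
    (hinj : ∀ p q, F p = F q → p = q ∨ MappingTorusRel f p q ∨ MappingTorusRel f q p) :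
    Function.Injective (lift F hF) := by
  rintro ⟨p⟩ ⟨q⟩ hpq
  rcases hinj p q hpq with rfl | hrel | hrel
  · rfl
  · exact Quot.sound hrel
  · exact (Quot.sound hrel).symm

lemma lift_surjective {F : Y × unitInterval → X} {hF : ∀ y, F (y, 1) = F (f y, 0)}
    (hsurj : Function.Surjective F) : Function.Surjective (lift F hF) :=
  fun x => let ⟨p, hp⟩ := hsurj x; ⟨Quot.mk _ p, hp⟩

instance [CompactSpace Y] : CompactSpace (MappingTorus f) :=
  Quot.compactSpace

end MappingTorus

section Translation

variable {G : Type*} [Group G] {χ : G →* Circle} {H : Subgroup G} {γ : ℝ → G} {f : H → H}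

lemma eq_or_mappingTorusRel_of_translation_eq (hH : ∀ x, x ∈ H ↔ χ x = 1)
    (hχγ : ∀ t, χ (γ t) = Circle.exp (2 * Real.pi * t)) (hγ0 : γ 0 = 1)
    (hf : ∀ x, (f x : G) = γ 1 * x) (p q : H × unitInterval) (h : γ p.2 * p.1 = γ q.2 * q.1) :
    p = q ∨ MappingTorusRel f p q ∨ MappingTorusRel f q p := by
  obtain ⟨x, t⟩ := p
  obtain ⟨y, s⟩ := q
  have hexp : Circle.exp (2 * Real.pi * t) = Circle.exp (2 * Real.pi * s) := by
    simpa [(hH x).mp x.2, (hH y).mp y.2, hχγ] using congrArg χ h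
  rcases Circle.eq_or_of_exp_two_pi_mul_eq t.2 s.2 hexp with hts | ⟨ht, hs⟩ | ⟨ht, hs⟩
  · obtain rfl : t = s := Subtype.ext hts
    exact Or.inl (congrArg (·, t) (Subtype.ext (mul_left_cancel h)))
  · obtain rfl : t = 1 := Subtype.ext ht
    obtain rfl : s = 0 := Subtype.ext hs
    refine Or.inr (Or.inl ⟨rfl, rfl, Subtype.ext ?_⟩)
    simpa [hf, hγ0] using h.symm
  · obtain rfl : t = 0 := Subtype.ext ht
    obtain rfl : s = 1 := Subtype.ext hs
    refine Or.inr (Or.inr ⟨rfl, rfl, Subtype.ext ?_⟩)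
    simpa [hf, hγ0] using h

lemma surjective_translation (hH : ∀ x, x ∈ H ↔ χ x = 1)
    (hχγ : ∀ t, χ (γ t) = Circle.exp (2 * Real.pi * t)) :
    Function.Surjective fun p : H × unitInterval => γ p.2 * p.1 := by
  intro g
  obtain ⟨t, ht, hexp⟩ := Circle.exists_mem_Ico_exp_two_pi_mul_eq (χ g)
  have hmem : (γ t)⁻¹ * g ∈ H := by
    rw [hH, map_mul, map_inv, hχγ, hexp, inv_mul_cancel]
  exact ⟨(⟨_, hmem⟩, ⟨t, Ico_subset_Icc_self ht⟩), mul_inv_cancel_left _ _⟩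

theorem nonempty_homeomorph_mappingTorus_of_translation [TopologicalSpace G] [ContinuousMul G]
    [CompactSpace G] [T2Space G] (hχ : Continuous χ) (hH : ∀ x, x ∈ H ↔ χ x = 1)
    (hγ : Continuous γ) (hχγ : ∀ t, χ (γ t) = Circle.exp (2 * Real.pi * t)) (hγ0 : γ 0 = 1)
    (hf : ∀ x, (f x : G) = γ 1 * x) :
    Nonempty (G ≃ₜ MappingTorus f) := by
  have hclosed : IsClosed (H : Set G) := by
    rw [show (H : Set G) = χ ⁻¹' {1} from ext hH]
    exact isClosed_singleton.preimage hχ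
  have : CompactSpace H := isCompact_iff_compactSpace.mp hclosed.isCompact
  let F : H × unitInterval → G := fun p => γ p.2 * p.1
  have hF : ∀ x, F (x, 1) = F (f x, 0) := fun x => by simp [F, hf, hγ0]
  have hcont : Continuous F := by fun_prop
  let e : MappingTorus f ≃ G := Equiv.ofBijective (MappingTorus.lift F hF)
    ⟨MappingTorus.lift_injective (eq_or_mappingTorusRel_of_translation_eq hH hχγ hγ0 hf),
      MappingTorus.lift_surjective (surjective_translation hH hχγ)⟩
  exact ⟨(MappingTorus.continuous_lift (hF := hF) hcont).homeoOfEquivCompactToT2 (f := e) |>.symm⟩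

end Translation

section Solenoid

variable {w : ℕ → ℕ}

noncomputable def solenoidProj (w : ℕ → ℕ) (n : ℕ) : Solenoid w →* Circle :=
  (Pi.evalMonoidHom (fun _ => Circle) n).comp (solenoidSubgroup w).subtype

lemma continuous_solenoidProj (n : ℕ) : Continuous (solenoidProj w n) :=
  (continuous_apply n).comp continuous_subtype_val

lemma solenoid_coord_eq_pow (x : Solenoid w) {k m : ℕ} (hk : k ≤ m) :
    (x : ℕ → Circle) k = (x : ℕ → Circle) m ^ ∏ j ∈ Finset.Ico k m, w j := by
  induction m, hk using Nat.le_induction with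
  | base => simp
  | succ m hm ih => rw [ih, x.2 m, Finset.prod_Ico_succ_top hm, ← pow_mul, mul_comm]

lemma mem_gammaSubgroup_iff {n : ℕ} (x : Solenoid w) :
    x ∈ gammaSubgroup w n ↔ solenoidProj w n x = 1 := by
  refine ⟨fun hx => hx n le_rfl, fun hx k hk => ?_⟩
  change (x : ℕ → Circle) n = 1 at hx
  rw [solenoid_coord_eq_pow x hk, hx, one_pow]

lemma solenoidProj_solenoidGamma (hw : ∀ n, 1 < w n) (n : ℕ) (t : ℝ) :
    solenoidProj w n (solenoidGamma w hw (t * ∏ j ∈ Finset.range n, (w j : ℝ))) =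
      Circle.exp (2 * Real.pi * t) := by
  change Circle.exp _ = _
  have := prod_w_ne_zero hw n
  congr 1
  field_simp

lemma solenoidGamma_zero (hw : ∀ n, 1 < w n) : solenoidGamma w hw 0 = 1 :=
  Subtype.ext <| funext fun _ => by simp [solenoidGamma]

lemma continuous_solenoidGamma (hw : ∀ n, 1 < w n) : Continuous (solenoidGamma w hw) :=
  (continuous_pi fun _ => Circle.exp.continuous.comp (by fun_prop)).subtype_mk _

lemma isClosed_solenoidSubgroup : IsClosed (solenoidSubgroup w : Set (ℕ → Circle)) := by
  simp only [solenoidSubgroup, Subgroup.coe_set_mk, Submonoid.coe_set_mk,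
    Subsemigroup.coe_set_mk, ofPred_forall]
  exact isClosed_iInter fun k => isClosed_eq (continuous_apply k) ((continuous_apply _).pow _)

instance : CompactSpace (Solenoid w) :=
  isCompact_iff_compactSpace.mp isClosed_solenoidSubgroup.isCompact

end Solenoid

/-- **The solenoid is homeomorphic to the mapping torus of the translation
`ψₙ : Γₙ → Γₙ`, `ψₙ(x) = γ(w₁⋯wₙ)·x`.** -/
theorem solenoid_homeomorphic_mapping_torus
    (w : ℕ → ℕ) (hw : ∀ n, 1 < w n) (n : ℕ) :
    Nonempty (Solenoid w ≃ₜ MappingTorus (solenoidPsi w hw n)) :=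
  nonempty_homeomorph_mappingTorus_of_translation (continuous_solenoidProj n)
    mem_gammaSubgroup_iff ((continuous_solenoidGamma hw).comp (by fun_prop))
    (solenoidProj_solenoidGamma hw n) (by simp [solenoidGamma_zero])
    (fun x => by rw [Function.comp_apply, one_mul]; rfl)
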